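/- arXiv:1004.0601 — 4 statements merged into one kernel-verified Lean document; each statement's English description precedes it below -/
import Mathlib

section
/- Let V be a finite-dimensional real vector space with a skew-symmetric bilinear bracket [·,·] : V × V → V (not assumed to satisfy the Jacobi identity) and a symmetric bilinear form K on V that is invariant, i.e. K([x,y],z) + K(y,[x,z]) = 0 for all x,y,z ∈ V. Define the Jacobiator Jac(x,y,z) = [[x,y],z] + [[y,z],x] + [[z,x],y] and the 4-linear form Ω(x,y,z,w) = K(Jac(x,y,z), w). Then Ω is alternating: it changes sign under the interchange of any two of its four arguments (equivalently, Ω vanishes whenever two of its arguments are equal). -/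
/-- The Jacobiator of a bilinear bracket. -/
def jacobiator {V : Type*} [AddCommGroup V] [Module ℝ V]
    (bracket : V →ₗ[ℝ] V →ₗ[ℝ] V) (x y z : V) : V :=
  bracket (bracket x y) z + bracket (bracket y z) x + bracket (bracket z x) y

/-- The 4-linear form Ω(x,y,z,w) = K(Jac(x,y,z), w). -/
def omegaForm {V : Type*} [AddCommGroup V] [Module ℝ V]
    (bracket : V →ₗ[ℝ] V →ₗ[ℝ] V) (K : V →ₗ[ℝ] V →ₗ[ℝ] ℝ) (x y z w : V) : ℝ :=
  K (jacobiator bracket x y z) w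

/-- if the skew-symmetric bilinear bracket has an invariant symmetric
bilinear form `K`, then Ω(x,y,z,w) = K(Jac(x,y,z),w) is alternating: it changes sign
under the interchange of any two of its four arguments. -/
theorem omegaForm_alternating
    {V : Type*} [AddCommGroup V] [Module ℝ V] [FiniteDimensional ℝ V]
    (bracket : V →ₗ[ℝ] V →ₗ[ℝ] V)
    (hskew : ∀ x y : V, bracket x y = - bracket y x)
    (K : V →ₗ[ℝ] V →ₗ[ℝ] ℝ)
    (hKsymm : ∀ x y : V, K x y = K y x)
    (hKinv : ∀ x y z : V, K (bracket x y) z + K y (bracket x z) = 0) :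
    ∀ x y z w : V,
      omegaForm bracket K y x z w = - omegaForm bracket K x y z w ∧
      omegaForm bracket K z y x w = - omegaForm bracket K x y z w ∧
      omegaForm bracket K w y z x = - omegaForm bracket K x y z w ∧
      omegaForm bracket K x z y w = - omegaForm bracket K x y z w ∧
      omegaForm bracket K x w z y = - omegaForm bracket K x y z w ∧
      omegaForm bracket K x y w z = - omegaForm bracket K x y z w := by
  intro x y z w
  -- K([a,b],c) = -K(b,[a,c])
  have hb : ∀ a b c : V, K (bracket a b) c = - K b (bracket a c) := by
    intro a b c
    have := hKinv a b c
    linarith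
  -- key: K([[a,b],c],d) = K([a,b],[c,d])
  have key : ∀ a b c d : V, K (bracket (bracket a b) c) d
      = K (bracket a b) (bracket c d) := by
    intro a b c d
    rw [hskew (bracket a b) c]
    simp only [map_neg, LinearMap.neg_apply]
    rw [hb c (bracket a b) d]
    ring
  -- symmetries of h a b c d := K([a,b],[c,d])
  have h1 : ∀ a b c d : V, K (bracket a b) (bracket c d)
      = - K (bracket b a) (bracket c d) := by
    intro a b c d
    rw [hskew a b]
    simp
  have h2 : ∀ a b c d : V, K (bracket a b) (bracket c d)
      = - K (bracket a b) (bracket d c) := by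
    intro a b c d
    rw [hskew c d]
    simp
  have h3 : ∀ a b c d : V, K (bracket a b) (bracket c d)
      = K (bracket c d) (bracket a b) := fun a b c d => hKsymm _ _
  simp only [omegaForm, jacobiator, map_add, LinearMap.add_apply, key]
  refine ⟨?_, ?_, ?_, ?_, ?_, ?_⟩ <;>
    linarith [h1 y x z w, h1 x z y w, h1 z y x w, h1 y z x w, h1 z x y w,
      h1 x y z w, h1 y x z w,
      h3 w y z x, h2 z x y w, h2 y z x w, h3 z w y x,
      h3 x w z y, h1 z y x w, h3 w z x y, h2 x y z w, h2 z x w y,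
      h3 y w x z, h1 x z y w, h3 w x y z]
end

section
/- Let V be a finite-dimensional real vector space with a skew-symmetric bilinear bracket [·,·] : V × V → V (not assumed to satisfy the Jacobi identity) and a nondegenerate symmetric invariant bilinear form K on V (invariance: K([x,y],z) + K(y,[x,z]) = 0). Define Jac(x,y,z) = [[x,y],z] + [[y,z],x] + [[z,x],y] and Ω(x,y,z,w) = K(Jac(x,y,z), w). Then δΩ = 0, i.e. for all x₁,…,x₅ ∈ V one has Σ_{1≤i<j≤5} (−1)^{i+j} Ω([x_i,x_j], x₁,…,x̂_i,…,x̂_j,…,x₅) = 0, where hats denote omitted arguments. -/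
set_option maxHeartbeats 4000000 in
/-- for a skew-symmetric bilinear bracket with a nondegenerate invariant
symmetric bilinear form `K`, the 4-form Ω(x,y,z,w) = K(Jac(x,y,z),w) is closed with
respect to the Chevalley–Eilenberg-type differential of the bracket:
Σ_{1≤i<j≤5} (−1)^{i+j} Ω([x_i,x_j], x₁,…,x̂_i,…,x̂_j,…,x₅) = 0. -/
theorem omegaForm_closed
    {V : Type*} [AddCommGroup V] [Module ℝ V] [FiniteDimensional ℝ V]
    (bracket : V →ₗ[ℝ] V →ₗ[ℝ] V)
    (hskew : ∀ x y : V, bracket x y = - bracket y x)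
    (K : V →ₗ[ℝ] V →ₗ[ℝ] ℝ)
    (hKsymm : ∀ x y : V, K x y = K y x)
    (hKnondeg : ∀ x : V, (∀ y : V, K x y = 0) → x = 0)
    (hKinv : ∀ x y z : V, K (bracket x y) z + K y (bracket x z) = 0) :
    ∀ x₁ x₂ x₃ x₄ x₅ : V,
      - omegaForm bracket K (bracket x₁ x₂) x₃ x₄ x₅
      + omegaForm bracket K (bracket x₁ x₃) x₂ x₄ x₅
      - omegaForm bracket K (bracket x₁ x₄) x₂ x₃ x₅
      + omegaForm bracket K (bracket x₁ x₅) x₂ x₃ x₄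
      - omegaForm bracket K (bracket x₂ x₃) x₁ x₄ x₅
      + omegaForm bracket K (bracket x₂ x₄) x₁ x₃ x₅
      - omegaForm bracket K (bracket x₂ x₅) x₁ x₃ x₄
      - omegaForm bracket K (bracket x₃ x₄) x₁ x₂ x₅
      + omegaForm bracket K (bracket x₃ x₅) x₁ x₂ x₄
      - omegaForm bracket K (bracket x₄ x₅) x₁ x₂ x₃ = 0 := by
  intro x₁ x₂ x₃ x₄ x₅
  simp only [omegaForm, jacobiator, map_add, LinearMap.add_apply]
  have sk0 : K (bracket x₂ x₃) (bracket (bracket x₁ x₅) x₄) = -K (bracket x₂ x₃) (bracket x₄ (bracket x₁ x₅)) := by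
    simp only [hskew (bracket x₁ x₅) x₄, map_neg, LinearMap.neg_apply, neg_neg]
  have sk1 : K (bracket (bracket x₁ x₂) x₃) (bracket x₄ x₅) = -K (bracket x₃ (bracket x₁ x₂)) (bracket x₄ x₅) := by
    simp only [hskew (bracket x₁ x₂) x₃, map_neg, LinearMap.neg_apply, neg_neg]
  have sk2 : K (bracket (bracket x₁ x₂) x₄) (bracket x₃ x₅) = -K (bracket x₄ (bracket x₁ x₂)) (bracket x₃ x₅) := by
    simp only [hskew (bracket x₁ x₂) x₄, map_neg, LinearMap.neg_apply, neg_neg]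
  have sk3 : K (bracket (bracket x₁ x₃) x₄) (bracket x₂ x₅) = -K (bracket x₄ (bracket x₁ x₃)) (bracket x₂ x₅) := by
    simp only [hskew (bracket x₁ x₃) x₄, map_neg, LinearMap.neg_apply, neg_neg]
  have sk4 : K (bracket (bracket x₂ x₃) (bracket x₁ x₄)) x₅ = -K (bracket (bracket x₁ x₄) (bracket x₂ x₃)) x₅ := by
    simp only [hskew (bracket x₂ x₃) (bracket x₁ x₄), map_neg, LinearMap.neg_apply, neg_neg]
  have sk5 : K (bracket (bracket x₂ x₃) (bracket x₁ x₅)) x₄ = -K (bracket (bracket x₁ x₅) (bracket x₂ x₃)) x₄ := by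
    simp only [hskew (bracket x₂ x₃) (bracket x₁ x₅), map_neg, LinearMap.neg_apply, neg_neg]
  have sk6 : K (bracket (bracket x₂ x₄) (bracket x₁ x₃)) x₅ = -K (bracket (bracket x₁ x₃) (bracket x₂ x₄)) x₅ := by
    simp only [hskew (bracket x₂ x₄) (bracket x₁ x₃), map_neg, LinearMap.neg_apply, neg_neg]
  have sk7 : K (bracket (bracket x₂ (bracket x₃ x₄)) x₁) x₅ = -K (bracket x₁ (bracket x₂ (bracket x₃ x₄))) x₅ := by
    simp only [hskew (bracket x₂ (bracket x₃ x₄)) x₁, map_neg, LinearMap.neg_apply, neg_neg]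
  have sk8 : K (bracket (bracket x₂ (bracket x₃ x₅)) x₁) x₄ = -K (bracket x₁ (bracket x₂ (bracket x₃ x₅))) x₄ := by
    simp only [hskew (bracket x₂ (bracket x₃ x₅)) x₁, map_neg, LinearMap.neg_apply, neg_neg]
  have sk9 : K (bracket (bracket x₂ (bracket x₄ x₅)) x₁) x₃ = -K (bracket x₁ (bracket x₂ (bracket x₄ x₅))) x₃ := by
    simp only [hskew (bracket x₂ (bracket x₄ x₅)) x₁, map_neg, LinearMap.neg_apply, neg_neg]
  have sk10 : K (bracket (bracket x₃ x₄) (bracket x₁ x₂)) x₅ = -K (bracket (bracket x₁ x₂) (bracket x₃ x₄)) x₅ := by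
    simp only [hskew (bracket x₃ x₄) (bracket x₁ x₂), map_neg, LinearMap.neg_apply, neg_neg]
  have sk11 : K (bracket (bracket x₃ (bracket x₁ x₄)) x₂) x₅ = -K (bracket x₂ (bracket x₃ (bracket x₁ x₄))) x₅ := by
    simp only [hskew (bracket x₃ (bracket x₁ x₄)) x₂, map_neg, LinearMap.neg_apply, neg_neg]
  have sk12 : K (bracket (bracket x₃ (bracket x₁ x₅)) x₂) x₄ = -K (bracket x₂ (bracket x₃ (bracket x₁ x₅))) x₄ := by
    simp only [hskew (bracket x₃ (bracket x₁ x₅)) x₂, map_neg, LinearMap.neg_apply, neg_neg]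
  have sk13 : K (bracket (bracket x₃ (bracket x₂ x₄)) x₁) x₅ = -K (bracket x₁ (bracket x₃ (bracket x₂ x₄))) x₅ := by
    simp only [hskew (bracket x₃ (bracket x₂ x₄)) x₁, map_neg, LinearMap.neg_apply, neg_neg]
  have sk14 : K (bracket (bracket x₃ (bracket x₂ x₅)) x₁) x₄ = -K (bracket x₁ (bracket x₃ (bracket x₂ x₅))) x₄ := by
    simp only [hskew (bracket x₃ (bracket x₂ x₅)) x₁, map_neg, LinearMap.neg_apply, neg_neg]
  have sk15 : K (bracket (bracket x₄ (bracket x₁ x₂)) x₃) x₅ = -K (bracket x₃ (bracket x₄ (bracket x₁ x₂))) x₅ := by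
    simp only [hskew (bracket x₄ (bracket x₁ x₂)) x₃, map_neg, LinearMap.neg_apply, neg_neg]
  have sk16 : K (bracket (bracket x₄ (bracket x₁ x₃)) x₂) x₅ = -K (bracket x₂ (bracket x₄ (bracket x₁ x₃))) x₅ := by
    simp only [hskew (bracket x₄ (bracket x₁ x₃)) x₂, map_neg, LinearMap.neg_apply, neg_neg]
  have sk17 : K (bracket (bracket x₄ (bracket x₂ x₃)) x₁) x₅ = -K (bracket x₁ (bracket x₄ (bracket x₂ x₃))) x₅ := by
    simp only [hskew (bracket x₄ (bracket x₂ x₃)) x₁, map_neg, LinearMap.neg_apply, neg_neg]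
  have sk18 : K (bracket (bracket (bracket x₁ x₂) x₃) x₄) x₅ = K (bracket x₄ (bracket x₃ (bracket x₁ x₂))) x₅ := by
    simp only [hskew (bracket x₁ x₂) x₃, hskew (bracket x₃ (bracket x₁ x₂)) x₄, map_neg, LinearMap.neg_apply, neg_neg]
  have sk19 : K (bracket (bracket (bracket x₁ x₃) x₂) x₄) x₅ = K (bracket x₄ (bracket x₂ (bracket x₁ x₃))) x₅ := by
    simp only [hskew (bracket x₁ x₃) x₂, hskew (bracket x₂ (bracket x₁ x₃)) x₄, map_neg, LinearMap.neg_apply, neg_neg]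
  have sk20 : K (bracket (bracket (bracket x₁ x₄) x₂) x₃) x₅ = K (bracket x₃ (bracket x₂ (bracket x₁ x₄))) x₅ := by
    simp only [hskew (bracket x₁ x₄) x₂, hskew (bracket x₂ (bracket x₁ x₄)) x₃, map_neg, LinearMap.neg_apply, neg_neg]
  have sk21 : K (bracket (bracket (bracket x₁ x₅) x₂) x₃) x₄ = K (bracket x₃ (bracket x₂ (bracket x₁ x₅))) x₄ := by
    simp only [hskew (bracket x₁ x₅) x₂, hskew (bracket x₂ (bracket x₁ x₅)) x₃, map_neg, LinearMap.neg_apply, neg_neg]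
  have sk22 : K (bracket (bracket (bracket x₂ x₃) x₁) x₄) x₅ = K (bracket x₄ (bracket x₁ (bracket x₂ x₃))) x₅ := by
    simp only [hskew (bracket x₂ x₃) x₁, hskew (bracket x₁ (bracket x₂ x₃)) x₄, map_neg, LinearMap.neg_apply, neg_neg]
  have sk23 : K (bracket (bracket (bracket x₂ x₄) x₁) x₃) x₅ = K (bracket x₃ (bracket x₁ (bracket x₂ x₄))) x₅ := by
    simp only [hskew (bracket x₂ x₄) x₁, hskew (bracket x₁ (bracket x₂ x₄)) x₃, map_neg, LinearMap.neg_apply, neg_neg]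
  have sk24 : K (bracket (bracket (bracket x₂ x₅) x₁) x₃) x₄ = K (bracket x₃ (bracket x₁ (bracket x₂ x₅))) x₄ := by
    simp only [hskew (bracket x₂ x₅) x₁, hskew (bracket x₁ (bracket x₂ x₅)) x₃, map_neg, LinearMap.neg_apply, neg_neg]
  have sk25 : K (bracket (bracket (bracket x₃ x₄) x₁) x₂) x₅ = K (bracket x₂ (bracket x₁ (bracket x₃ x₄))) x₅ := by
    simp only [hskew (bracket x₃ x₄) x₁, hskew (bracket x₁ (bracket x₃ x₄)) x₂, map_neg, LinearMap.neg_apply, neg_neg]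
  have sk26 : K (bracket (bracket (bracket x₃ x₅) x₁) x₂) x₄ = K (bracket x₂ (bracket x₁ (bracket x₃ x₅))) x₄ := by
    simp only [hskew (bracket x₃ x₅) x₁, hskew (bracket x₁ (bracket x₃ x₅)) x₂, map_neg, LinearMap.neg_apply, neg_neg]
  have sk27 : K (bracket (bracket (bracket x₄ x₅) x₁) x₂) x₃ = K (bracket x₂ (bracket x₁ (bracket x₄ x₅))) x₃ := by
    simp only [hskew (bracket x₄ x₅) x₁, hskew (bracket x₁ (bracket x₄ x₅)) x₂, map_neg, LinearMap.neg_apply, neg_neg]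
  linear_combination
      (-1 : ℝ) * (sk18)
      + (-1 : ℝ) * (hKinv x₄ (bracket x₃ (bracket x₁ x₂)) x₅)
      + (-1 : ℝ) * (sk10)
      + (-1 : ℝ) * (sk15)
      + (1 : ℝ) * (hKinv x₃ (bracket x₄ (bracket x₁ x₂)) x₅)
      + (1 : ℝ) * (sk19)
      + (1 : ℝ) * (hKinv x₄ (bracket x₂ (bracket x₁ x₃)) x₅)
      + (-1 : ℝ) * (hKinv x₂ (bracket x₁ x₃) (bracket x₄ x₅))
      + (1 : ℝ) * (hKinv x₁ x₃ (bracket x₂ (bracket x₄ x₅)))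
      + (1 : ℝ) * (sk6)
      + (1 : ℝ) * (sk16)
      + (-1 : ℝ) * (hKinv x₂ (bracket x₄ (bracket x₁ x₃)) x₅)
      + (-1 : ℝ) * (sk20)
      + (-1 : ℝ) * (hKinv x₃ (bracket x₂ (bracket x₁ x₄)) x₅)
      + (1 : ℝ) * (hKinv x₂ (bracket x₁ x₄) (bracket x₃ x₅))
      + (-1 : ℝ) * (hKinv x₁ x₄ (bracket x₂ (bracket x₃ x₅)))
      + (-1 : ℝ) * (sk4)
      + (-1 : ℝ) * (sk11)
      + (1 : ℝ) * (hKinv x₂ (bracket x₃ (bracket x₁ x₄)) x₅)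
      + (-1 : ℝ) * (hKinv x₃ (bracket x₁ x₄) (bracket x₂ x₅))
      + (1 : ℝ) * (hKinv x₁ x₄ (bracket x₃ (bracket x₂ x₅)))
      + (1 : ℝ) * (sk21)
      + (1 : ℝ) * (hKsymm (bracket x₃ (bracket x₂ (bracket x₁ x₅))) x₄)
      + (1 : ℝ) * (sk5)
      + (-1 : ℝ) * (hKinv (bracket x₁ x₅) (bracket x₂ x₃) x₄)
      + (1 : ℝ) * (sk0)
      + (1 : ℝ) * (sk12)
      + (-1 : ℝ) * (hKsymm (bracket x₂ (bracket x₃ (bracket x₁ x₅))) x₄)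
      + (-1 : ℝ) * (sk22)
      + (-1 : ℝ) * (hKinv x₄ (bracket x₁ (bracket x₂ x₃)) x₅)
      + (1 : ℝ) * (hKinv x₁ (bracket x₂ x₃) (bracket x₄ x₅))
      + (-1 : ℝ) * (hKinv x₂ x₃ (bracket x₁ (bracket x₄ x₅)))
      + (-1 : ℝ) * (sk17)
      + (1 : ℝ) * (hKinv x₁ (bracket x₄ (bracket x₂ x₃)) x₅)
      + (-1 : ℝ) * (hKinv x₄ (bracket x₂ x₃) (bracket x₁ x₅))
      + (1 : ℝ) * (sk23)
      + (1 : ℝ) * (hKinv x₃ (bracket x₁ (bracket x₂ x₄)) x₅)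
      + (-1 : ℝ) * (hKinv x₁ (bracket x₂ x₄) (bracket x₃ x₅))
      + (1 : ℝ) * (hKinv x₂ x₄ (bracket x₁ (bracket x₃ x₅)))
      + (1 : ℝ) * (sk13)
      + (-1 : ℝ) * (hKinv x₁ (bracket x₃ (bracket x₂ x₄)) x₅)
      + (1 : ℝ) * (hKinv x₃ (bracket x₂ x₄) (bracket x₁ x₅))
      + (-1 : ℝ) * (hKinv x₂ x₄ (bracket x₃ (bracket x₁ x₅)))
      + (-1 : ℝ) * (sk24)
      + (-1 : ℝ) * (hKsymm (bracket x₃ (bracket x₁ (bracket x₂ x₅))) x₄)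
      + (-1 : ℝ) * (hKsymm (bracket (bracket x₁ x₃) (bracket x₂ x₅)) x₄)
      + (-1 : ℝ) * (hKinv (bracket x₁ x₃) x₄ (bracket x₂ x₅))
      + (1 : ℝ) * (sk3)
      + (-1 : ℝ) * (sk14)
      + (1 : ℝ) * (hKsymm (bracket x₁ (bracket x₃ (bracket x₂ x₅))) x₄)
      + (-1 : ℝ) * (sk25)
      + (-1 : ℝ) * (hKinv x₂ (bracket x₁ (bracket x₃ x₄)) x₅)
      + (1 : ℝ) * (hKinv x₁ (bracket x₃ x₄) (bracket x₂ x₅))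
      + (-1 : ℝ) * (hKinv x₃ x₄ (bracket x₁ (bracket x₂ x₅)))
      + (-1 : ℝ) * (sk7)
      + (1 : ℝ) * (hKinv x₁ (bracket x₂ (bracket x₃ x₄)) x₅)
      + (-1 : ℝ) * (hKinv x₂ (bracket x₃ x₄) (bracket x₁ x₅))
      + (1 : ℝ) * (hKinv x₃ x₄ (bracket x₂ (bracket x₁ x₅)))
      + (1 : ℝ) * (sk26)
      + (1 : ℝ) * (hKsymm (bracket x₂ (bracket x₁ (bracket x₃ x₅))) x₄)
      + (1 : ℝ) * (hKsymm (bracket (bracket x₁ x₂) (bracket x₃ x₅)) x₄)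
      + (1 : ℝ) * (hKinv (bracket x₁ x₂) x₄ (bracket x₃ x₅))
      + (-1 : ℝ) * (sk2)
      + (1 : ℝ) * (sk8)
      + (-1 : ℝ) * (hKsymm (bracket x₁ (bracket x₂ (bracket x₃ x₅))) x₄)
      + (-1 : ℝ) * (sk27)
      + (-1 : ℝ) * (hKsymm (bracket x₂ (bracket x₁ (bracket x₄ x₅))) x₃)
      + (-1 : ℝ) * (hKsymm (bracket (bracket x₁ x₂) (bracket x₄ x₅)) x₃)
      + (-1 : ℝ) * (hKinv (bracket x₁ x₂) x₃ (bracket x₄ x₅))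
      + (1 : ℝ) * (sk1)
      + (-1 : ℝ) * (sk9)
      + (1 : ℝ) * (hKsymm (bracket x₁ (bracket x₂ (bracket x₄ x₅))) x₃)
end

section
/- (Proposition 4.3.) Let V be a finite-dimensional real vector space with a skew-symmetric bilinear bracket [·,·] : V × V → V (not assumed to satisfy the Jacobi identity) and a nondegenerate symmetric invariant bilinear form K on V (invariance: K([x,y],z) + K(y,[x,z]) = 0). Let ♭ : V → V* be the isomorphism x ↦ K(x,·), set ∂ := ♭⁻¹ : V* → V, and define Jac(x,y,z) = [[x,y],z] + [[y,z],x] + [[z,x],y] and Ω(x,y,z,w) = K(Jac(x,y,z), w). Then (V, [·,·], ∂, Ω) is a Lie algebra up to homotopy; concretely: (i) Ω is a multilinear alternating 4-form on V; (ii) Jac(x,y,z) = ∂(Ω(x,y,z,·)) for all x,y,z ∈ V (the Jacobi anomaly equals ∂Ω); (iii) the symmetric pairing (α,β) := β(∂α) on V* is invariant under the coadjoint action: (L_xα, β) + (α, L_xβ) = 0 for all x ∈ V and α,β ∈ V*, where (L_xα)(y) = −α([x,y]); (iv) δΩ = 0, i.e. Σ_{1≤i<j≤5} (−1)^{i+j}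 Ω([x_i,x_j], x₁,…,x̂_i,…,x̂_j,…,x₅) = 0 for all x₁,…,x₅ ∈ V. -/
/-- The coadjoint action (L_x α)(y) = −α([x,y]). -/
def coadAction {V : Type*} [AddCommGroup V] [Module ℝ V]
    (bracket : V →ₗ[ℝ] V →ₗ[ℝ] V) (x : V) (α : V →ₗ[ℝ] ℝ) : V →ₗ[ℝ] ℝ :=
  - (α ∘ₗ bracket x)

/-- Proposition 4.3: with a nondegenerate symmetric invariant form `K`,
`♭ : x ↦ K(x,·)` and `∂ := ♭⁻¹`, the data (V, [·,·], ∂, Ω) is a Lie algebra up to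
homotopy: (i) Ω is alternating; (ii) Jac(x,y,z) = ∂(Ω(x,y,z,·)); (iii) the pairing
(α,β) := β(∂α) on V* is invariant under the coadjoint action; (iv) δΩ = 0. -/
theorem lie_algebra_up_to_homotopy
    {V : Type*} [AddCommGroup V] [Module ℝ V] [FiniteDimensional ℝ V]
    (bracket : V →ₗ[ℝ] V →ₗ[ℝ] V)
    (hskew : ∀ x y : V, bracket x y = - bracket y x)
    (K : V →ₗ[ℝ] V →ₗ[ℝ] ℝ)
    (hKsymm : ∀ x y : V, K x y = K y x)
    (hKnondeg : ∀ x : V, (∀ y : V, K x y = 0) → x = 0)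
    (hKinv : ∀ x y z : V, K (bracket x y) z + K y (bracket x z) = 0)
    -- ∂ = ♭⁻¹, where ♭ : V → V*, x ↦ K(x,·)
    (del : (V →ₗ[ℝ] ℝ) →ₗ[ℝ] V)
    (hdel₁ : ∀ (α : V →ₗ[ℝ] ℝ) (y : V), K (del α) y = α y)
    (hdel₂ : ∀ x : V, del (K x) = x) :
    -- (i) Ω is a (multilinear) alternating 4-form: it vanishes whenever two of its
    -- arguments are equal
    (∀ x y z w : V,
      omegaForm bracket K x x z w = 0 ∧
      omegaForm bracket K x y x w = 0 ∧
      omegaForm bracket K x y z x = 0 ∧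
      omegaForm bracket K x y y w = 0 ∧
      omegaForm bracket K x y z y = 0 ∧
      omegaForm bracket K x y z z = 0) ∧
    -- (ii) the Jacobi anomaly equals ∂Ω : Jac(x,y,z) = ∂(Ω(x,y,z,·))
    (∀ x y z : V, jacobiator bracket x y z = del (K (jacobiator bracket x y z))) ∧
    -- (iii) the symmetric pairing (α,β) = β(∂α) on V* is coadjoint-invariant
    (∀ (x : V) (α β : V →ₗ[ℝ] ℝ),
      β (del (coadAction bracket x α)) + (coadAction bracket x β) (del α) = 0) ∧
    -- (iv) δΩ = 0
    (∀ x₁ x₂ x₃ x₄ x₅ : V,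
      - omegaForm bracket K (bracket x₁ x₂) x₃ x₄ x₅
      + omegaForm bracket K (bracket x₁ x₃) x₂ x₄ x₅
      - omegaForm bracket K (bracket x₁ x₄) x₂ x₃ x₅
      + omegaForm bracket K (bracket x₁ x₅) x₂ x₃ x₄
      - omegaForm bracket K (bracket x₂ x₃) x₁ x₄ x₅
      + omegaForm bracket K (bracket x₂ x₄) x₁ x₃ x₅
      - omegaForm bracket K (bracket x₂ x₅) x₁ x₃ x₄
      - omegaForm bracket K (bracket x₃ x₄) x₁ x₂ x₅
      + omegaForm bracket K (bracket x₃ x₅) x₁ x₂ x₄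
      - omegaForm bracket K (bracket x₄ x₅) x₁ x₂ x₃ = 0) := by
  -- bracket of equal elements vanishes
  have brxx : ∀ x : V, bracket x x = 0 := by
    intro x
    have h2 : (2 : ℝ) • bracket x x = 0 := by
      rw [two_smul]
      nth_rewrite 2 [hskew x x]
      simp
    rcases smul_eq_zero.mp h2 with h' | h'
    · norm_num at h'
    · exact h'
  -- cyclicity of K(bracket ·,·)
  have cyc : ∀ x y z : V, K (bracket x y) z = K x (bracket y z) := by
    intro x y z
    have h1 := hKinv y z x
    have h2 : K z (bracket y x) = - K (bracket x y) z := by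
      rw [hKsymm, hskew y x, map_neg, LinearMap.neg_apply]
    have h3 : K x (bracket y z) = K (bracket y z) x := hKsymm _ _
    linarith
  -- key flip identity
  have key : ∀ a b c d e : V,
      K (bracket (bracket a b) c) (bracket d e)
        + K (bracket (bracket d e) c) (bracket a b) = 0 := by
    intro a b c d e
    have h : K (bracket (bracket d e) c) (bracket a b)
        = - K (bracket (bracket a b) c) (bracket d e) := by
      rw [cyc, hKsymm, hskew c (bracket a b), map_neg, LinearMap.neg_apply]
    linarith
  -- canonical form of omega
  have omega_eq : ∀ u a b c : V, omegaForm bracket K u a b c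
      = K (bracket u a) (bracket b c) - K (bracket u b) (bracket a c)
        + K (bracket u c) (bracket a b) := by
    intro u a b c
    simp only [omegaForm, jacobiator, map_add, LinearMap.add_apply]
    rw [cyc (bracket u a) b c, cyc (bracket a b) u c, cyc (bracket b u) a c,
      hKsymm (bracket a b) (bracket u c), hskew b u, map_neg, LinearMap.neg_apply]
    ring
  refine ⟨?_, ?_, ?_, ?_⟩
  · -- (i) alternating
    intro x y z w
    refine ⟨?_, ?_, ?_, ?_, ?_, ?_⟩
    · rw [omega_eq, brxx, map_zero, LinearMap.zero_apply]
      linear_combination hKsymm (bracket x w) (bracket x z)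
    · rw [omega_eq, brxx, map_zero, LinearMap.zero_apply, hskew y x, map_neg]
      linear_combination hKsymm (bracket x y) (bracket x w)
    · rw [omega_eq, brxx, map_zero, LinearMap.zero_apply, hskew z x, map_neg,
        hskew y x, map_neg]
      linear_combination hKsymm (bracket x z) (bracket x y)
    · rw [omega_eq, brxx, map_zero]
      ring
    · rw [omega_eq, brxx, map_zero, hskew z y, map_neg]
      ring
    · rw [omega_eq, brxx, map_zero]
      ring
  · -- (ii) Jacobi anomaly equals del of omega
    intro x y z
    exact (hdel₂ _).symm
  · -- (iii) coadjoint invariance of the pairing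
    intro x α β
    have hα : coadAction bracket x α = K (bracket x (del α)) := by
      ext y
      have h := hKinv x (del α) y
      rw [hdel₁] at h
      simp only [coadAction, LinearMap.neg_apply, LinearMap.comp_apply]
      linarith
    rw [hα, hdel₂]
    simp only [coadAction, LinearMap.neg_apply, LinearMap.comp_apply]
    ring
  · -- (iv) delta omega = 0
    intro x₁ x₂ x₃ x₄ x₅
    simp only [omega_eq]
    linear_combination (-1 : ℝ) * key x₁ x₂ x₃ x₄ x₅ + key x₁ x₂ x₄ x₃ x₅
      - key x₁ x₂ x₅ x₃ x₄ + key x₁ x₃ x₂ x₄ x₅ - key x₁ x₃ x₄ x₂ x₅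
      + key x₁ x₃ x₅ x₂ x₄ - key x₁ x₄ x₂ x₃ x₅ + key x₁ x₄ x₃ x₂ x₅
      - key x₁ x₄ x₅ x₂ x₃ + key x₁ x₅ x₂ x₃ x₄ - key x₁ x₅ x₃ x₂ x₄
      + key x₁ x₅ x₄ x₂ x₃ - key x₂ x₃ x₁ x₄ x₅ + key x₂ x₄ x₁ x₃ x₅
      - key x₂ x₅ x₁ x₃ x₄
end

section
/- (Remark 3.4: the higher Courant–Dorfman bracket is a Loday bracket; Lie algebra case with θ₂ = 0.) Let g be a finite-dimensional Lie algebra over a field of characteristic zero and let Ω be an alternating 4-linear form on g with δΩ = 0, where δ is the Chevalley–Eilenberg differential. On the direct sum g ⊕ A²(g), where A²(g) is the space of alternating bilinear forms on g, define the bracket [(x,α),(y,β)]_CD = ([x,y], L_xβ − ι_y(δα) + ι_y ι_x Ω), where (L_xβ)(u,v) = −β([x,u],v) − β(u,[x,v]), (ι_y(δα))(u,v) = (δα)(y,u,v) with (δα)(u,v,w) = −α([u,v],w) + α([u,w],v) − α([v,w],u), and (ι_y ι_x Ω)(u,v) = Ω(x,y,u,v). Then this bracket satisfies the left Leibniz (Loday)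 identity: [a,[b,c]_CD]_CD = [[a,b]_CD, c]_CD + [b,[a,c]_CD]_CD for all a,b,c ∈ g ⊕ A²(g). -/
/-- The Chevalley–Eilenberg differential of a 3-form on a Lie algebra:
(δα)(u,v,w) = −α([u,v],w) + α([u,w],v) − α([v,w],u). -/
def ceDiff2 {k g : Type*} [Field k] [LieRing g] (α : g → g → k) (u v w : g) : k :=
  - α ⁅u, v⁆ w + α ⁅u, w⁆ v - α ⁅v, w⁆ u

/-- The Chevalley–Eilenberg differential of a 4-form on a Lie algebra. -/
def ceDiff4 {k g : Type*} [Field k] [LieRing g] (ω : g → g → g → g → k)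
    (x₁ x₂ x₃ x₄ x₅ : g) : k :=
  - ω ⁅x₁, x₂⁆ x₃ x₄ x₅ + ω ⁅x₁, x₃⁆ x₂ x₄ x₅ - ω ⁅x₁, x₄⁆ x₂ x₃ x₅
  + ω ⁅x₁, x₅⁆ x₂ x₃ x₄ - ω ⁅x₂, x₃⁆ x₁ x₄ x₅ + ω ⁅x₂, x₄⁆ x₁ x₃ x₅
  - ω ⁅x₂, x₅⁆ x₁ x₃ x₄ - ω ⁅x₃, x₄⁆ x₁ x₂ x₅ + ω ⁅x₃, x₅⁆ x₁ x₂ x₄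
  - ω ⁅x₄, x₅⁆ x₁ x₂ x₃

/-- `β : g → g → k` is an alternating bilinear form, i.e. an element of A²(g). -/
def IsAlt2 {k g : Type*} [Field k] [LieRing g] [LieAlgebra k g] (β : g → g → k) : Prop :=
  (∀ u₁ u₂ v : g, β (u₁ + u₂) v = β u₁ v + β u₂ v) ∧
  (∀ (c : k) (u v : g), β (c • u) v = c * β u v) ∧
  (∀ u v₁ v₂ : g, β u (v₁ + v₂) = β u v₁ + β u v₂) ∧
  (∀ (c : k) (u v : g), β u (c • v) = c * β u v) ∧
  (∀ u : g, β u u = 0)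

/-- The higher Courant–Dorfman bracket on g ⊕ A²(g):
[(x,α),(y,β)]_CD = ([x,y], L_xβ − ι_y(δα) + ι_yι_xΩ). -/
def cdBracket {k g : Type*} [Field k] [LieRing g] [LieAlgebra k g]
    (Ω : AlternatingMap k g k (Fin 4)) (a b : g × (g → g → k)) : g × (g → g → k) :=
  (⁅a.1, b.1⁆,
    fun u v =>
      (- b.2 ⁅a.1, u⁆ v - b.2 u ⁅a.1, v⁆)      -- (L_x β)(u,v)
      - ceDiff2 a.2 b.1 u v                     -- − (ι_y δα)(u,v)
      + Ω ![a.1, b.1, u, v])                    -- (ι_y ι_x Ω)(u,v)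

section Helpers

variable {k : Type*} [Field k] {g : Type*} [LieRing g] [LieAlgebra k g]

lemma alt2_subl {β : g → g → k} (h : IsAlt2 β) (p q r : g) :
    β (p - q) r = β p r - β q r := by
  have h1 : p - q = p + (-1 : k) • q := by rw [neg_one_smul, sub_eq_add_neg]
  rw [h1, h.1, h.2.1]; ring

lemma alt2_subr {β : g → g → k} (h : IsAlt2 β) (p q r : g) :
    β r (p - q) = β r p - β r q := by
  have h1 : p - q = p + (-1 : k) • q := by rw [neg_one_smul, sub_eq_add_neg]
  rw [h1, h.2.2.1, h.2.2.2.1]; ring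

lemma alt2_negl {β : g → g → k} (h : IsAlt2 β) (p q : g) : β (-p) q = -β p q := by
  have h1 : -p = (-1 : k) • p := by rw [neg_one_smul]
  rw [h1, h.2.1]; ring

lemma alt2_zerol {β : g → g → k} (h : IsAlt2 β) (q : g) : β 0 q = 0 := by
  simpa using h.2.1 0 0 q

lemma alt2_skew {β : g → g → k} (h : IsAlt2 β) (p q : g) : β p q = -β q p := by
  have h0 : β (p + q) (p + q) = 0 := h.2.2.2.2 _
  rw [h.1, h.2.2.1, h.2.2.1] at h0
  linear_combination h0 - h.2.2.2.2 p - h.2.2.2.2 q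

lemma om_sw01 (Ω : AlternatingMap k g k (Fin 4)) (a b c d : g) :
    Ω ![a, b, c, d] = -Ω ![b, a, c, d] := by
  have h := Ω.map_swap (v := ![b, a, c, d]) (i := 0) (j := 1) (by decide)
  have e : (![b, a, c, d] ∘ Equiv.swap (0 : Fin 4) 1) = ![a, b, c, d] := by
    ext i; fin_cases i <;> simp [Equiv.swap_apply_def]
  rw [e] at h; rw [h]

lemma om_sw02 (Ω : AlternatingMap k g k (Fin 4)) (a b c d : g) :
    Ω ![a, b, c, d] = -Ω ![c, b, a, d] := by
  have h := Ω.map_swap (v := ![c, b, a, d]) (i := 0) (j := 2) (by decide)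
  have e : (![c, b, a, d] ∘ Equiv.swap (0 : Fin 4) 2) = ![a, b, c, d] := by
    ext i; fin_cases i <;> simp [Equiv.swap_apply_def]
  rw [e] at h; rw [h]

lemma om_sw03 (Ω : AlternatingMap k g k (Fin 4)) (a b c d : g) :
    Ω ![a, b, c, d] = -Ω ![d, b, c, a] := by
  have h := Ω.map_swap (v := ![d, b, c, a]) (i := 0) (j := 3) (by decide)
  have e : (![d, b, c, a] ∘ Equiv.swap (0 : Fin 4) 3) = ![a, b, c, d] := by
    ext i; fin_cases i <;> simp [Equiv.swap_apply_def]
  rw [e] at h; rw [h]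

lemma om_sw12 (Ω : AlternatingMap k g k (Fin 4)) (a b c d : g) :
    Ω ![a, b, c, d] = -Ω ![a, c, b, d] := by
  have h := Ω.map_swap (v := ![a, c, b, d]) (i := 1) (j := 2) (by decide)
  have e : (![a, c, b, d] ∘ Equiv.swap (1 : Fin 4) 2) = ![a, b, c, d] := by
    ext i; fin_cases i <;> simp [Equiv.swap_apply_def]
  rw [e] at h; rw [h]

lemma om_sw13 (Ω : AlternatingMap k g k (Fin 4)) (a b c d : g) :
    Ω ![a, b, c, d] = -Ω ![a, d, c, b] := by
  have h := Ω.map_swap (v := ![a, d, c, b]) (i := 1) (j := 3) (by decide)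
  have e : (![a, d, c, b] ∘ Equiv.swap (1 : Fin 4) 3) = ![a, b, c, d] := by
    ext i; fin_cases i <;> simp [Equiv.swap_apply_def]
  rw [e] at h; rw [h]

lemma om_sw23 (Ω : AlternatingMap k g k (Fin 4)) (a b c d : g) :
    Ω ![a, b, c, d] = -Ω ![a, b, d, c] := by
  have h := Ω.map_swap (v := ![a, b, d, c]) (i := 2) (j := 3) (by decide)
  have e : (![a, b, d, c] ∘ Equiv.swap (2 : Fin 4) 3) = ![a, b, c, d] := by
    ext i; fin_cases i <;> simp [Equiv.swap_apply_def]
  rw [e] at h; rw [h]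

/-- Move the third slot to the front (an even permutation). -/
lemma om_cyc2 (Ω : AlternatingMap k g k (Fin 4)) (a b c d : g) :
    Ω ![a, b, c, d] = Ω ![c, a, b, d] := by
  rw [om_sw02 Ω a b c d, om_sw12 Ω c b a d]; ring

/-- Move the fourth slot to the front (an odd permutation). -/
lemma om_cyc3 (Ω : AlternatingMap k g k (Fin 4)) (a b c d : g) :
    Ω ![a, b, c, d] = -Ω ![d, a, b, c] := by
  rw [om_sw03 Ω a b c d, om_sw13 Ω d b c a, om_sw23 Ω d a c b]; ring

end Helpers

/-- Remark 3.4, Lie algebra case with θ₂ = 0: the higher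
Courant–Dorfman bracket on g ⊕ A²(g) associated with a δ-closed alternating 4-form
Ω satisfies the left Leibniz (Loday) identity. -/
theorem cdBracket_loday
    {k : Type*} [Field k] [CharZero k]
    {g : Type*} [LieRing g] [LieAlgebra k g] [FiniteDimensional k g]
    (Ω : AlternatingMap k g k (Fin 4))
    (hΩ : ∀ x₁ x₂ x₃ x₄ x₅ : g,
      ceDiff4 (fun a b c d => Ω ![a, b, c, d]) x₁ x₂ x₃ x₄ x₅ = 0) :
    ∀ a b c : g × (g → g → k), IsAlt2 a.2 → IsAlt2 b.2 → IsAlt2 c.2 →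
      cdBracket Ω a (cdBracket Ω b c)
        = cdBracket Ω (cdBracket Ω a b) c + cdBracket Ω b (cdBracket Ω a c) := by
  rintro ⟨x, α⟩ ⟨y, β⟩ ⟨z, γ⟩ hα hβ hγ
  replace hα : IsAlt2 α := hα
  replace hβ : IsAlt2 β := hβ
  replace hγ : IsAlt2 γ := hγ
  refine Prod.ext ?_ ?_
  · simp only [cdBracket, Prod.fst_add]
    exact leibniz_lie x y z
  · funext u v
    have h5 := hΩ x y z u v
    simp only [ceDiff4] at h5
    -- skew instances for α
    have hsA1 := alt2_skew hα ⁅u, v⁆ ⁅y, z⁆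
    have hsA2 := alt2_skew hα ⁅y, u⁆ ⁅z, v⁆
    have hsA3 := alt2_skew hα ⁅y, v⁆ ⁅z, u⁆
    -- orientation instances for α on nested brackets
    have hvz : ⁅u, ⁅v, z⁆⁆ = -⁅u, ⁅z, v⁆⁆ := by
      rw [(lie_skew v z).symm, lie_neg]
    have hzu : ⁅v, ⁅z, u⁆⁆ = -⁅v, ⁅u, z⁆⁆ := by
      rw [(lie_skew z u).symm, lie_neg]
    have hvu : ⁅z, ⁅v, u⁆⁆ = -⁅z, ⁅u, v⁆⁆ := by
      rw [(lie_skew v u).symm, lie_neg]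
    have e1 : α ⁅u, ⁅v, z⁆⁆ y = -α ⁅u, ⁅z, v⁆⁆ y := by rw [hvz, alt2_negl hα]
    have e2 : α ⁅v, ⁅z, u⁆⁆ y = -α ⁅v, ⁅u, z⁆⁆ y := by rw [hzu, alt2_negl hα]
    have e3 : α ⁅z, ⁅v, u⁆⁆ y = -α ⁅z, ⁅u, v⁆⁆ y := by rw [hvu, alt2_negl hα]
    -- Jacobi instance for α
    have hj : ⁅u, ⁅z, v⁆⁆ + ⁅z, ⁅v, u⁆⁆ + ⁅v, ⁅u, z⁆⁆ = (0 : g) := lie_jacobi u z v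
    have hsum : α (⁅u, ⁅z, v⁆⁆ + ⁅z, ⁅v, u⁆⁆ + ⁅v, ⁅u, z⁆⁆) y
        = α ⁅u, ⁅z, v⁆⁆ y + α ⁅z, ⁅v, u⁆⁆ y + α ⁅v, ⁅u, z⁆⁆ y := by
      rw [hα.1, hα.1]
    rw [hj] at hsum
    have h00 : α (0 : g) y = 0 := alt2_zerol hα y
    have e4 : α ⁅u, ⁅z, v⁆⁆ y + α ⁅v, ⁅u, z⁆⁆ y + α ⁅z, ⁅v, u⁆⁆ y = 0 := by
      linear_combination h00 - hsum
    simp only [cdBracket, ceDiff2, Prod.snd_add, Pi.add_apply, lie_lie,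
      alt2_subl hα, alt2_subr hα, alt2_subl hβ, alt2_subr hβ,
      alt2_subl hγ, alt2_subr hγ]
    linear_combination h5
      + om_sw01 Ω x ⁅y, z⁆ u v - om_sw01 Ω y ⁅x, z⁆ u v
      - om_cyc2 Ω x y ⁅u, v⁆ z - om_cyc2 Ω x y ⁅z, u⁆ v + om_cyc2 Ω x y ⁅z, v⁆ u
      + om_cyc2 Ω x z ⁅y, u⁆ v - om_cyc2 Ω y z ⁅x, u⁆ v
      + om_cyc3 Ω x z u ⁅y, v⁆ - om_cyc3 Ω y z u ⁅x, v⁆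
      + hsA1 - hsA2 + hsA3
      - e1 - e2 - e3 + 2 * e4
end
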